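/- arXiv:0912.1757 — 12 statements merged into one kernel-verified Lean document; each statement's English description precedes it below -/
import Mathlib

section
/- Let R be a commutative ring with identity and M an R-module. Every strongly prime submodule of M is a prime submodule of M. -/
/-- A proper submodule `P` of `M` is *strongly prime* if whenever
`I_x^P • y ⊆ P` (where `I_x^P = (P + Rx : M)`), either `x ∈ P` or `y ∈ P`. -/
def Submodule.IsStronglyPrime {R M : Type*} [CommRing R] [AddCommGroup M] [Module R M]
    (P : Submodule R M) : Prop :=
  P ≠ ⊤ ∧ ∀ x y : M,
    (∀ r : R, (∀ m : M, r • m ∈ P ⊔ Submodule.span R {x}) → r • y ∈ P) → x ∈ P ∨ y ∈ P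

/-- A proper submodule `N` of `M` is *prime* if `r • x ∈ N` implies `x ∈ N` or `r • M ⊆ N`. -/
def Submodule.IsPrimeSubmodule {R M : Type*} [CommRing R] [AddCommGroup M] [Module R M]
    (N : Submodule R M) : Prop :=
  N ≠ ⊤ ∧ ∀ (r : R) (x : M), r • x ∈ N → x ∈ N ∨ ∀ m : M, r • m ∈ N

/-- Every strongly prime submodule is a prime submodule. -/
theorem Submodule.IsStronglyPrime.isPrimeSubmodule
    {R M : Type*} [CommRing R] [AddCommGroup M] [Module R M]
    (P : Submodule R M) (hP : P.IsStronglyPrime) : P.IsPrimeSubmodule := by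
  refine ⟨hP.1, fun r x hrx => ?_⟩
  by_cases hx : x ∈ P
  · exact Or.inl hx
  · refine Or.inr fun m => ?_
    have key : ∀ s : R, (∀ m' : M, s • m' ∈ P ⊔ Submodule.span R {x}) → s • (r • m) ∈ P := by
      intro s hs
      have hsm := hs m
      rw [Submodule.mem_sup] at hsm
      obtain ⟨p, hp, z, hz, hpz⟩ := hsm
      rw [Submodule.mem_span_singleton] at hz
      obtain ⟨c, rfl⟩ := hz
      have : s • (r • m) = r • p + c • (r • x) := by
        rw [smul_comm s r m, ← hpz, smul_add, smul_comm r c x]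
      rw [this]
      exact P.add_mem (P.smul_mem r hp) (P.smul_mem c hrx)
    rcases hP.2 x (r • m) key with h | h
    · exact absurd h hx
    · exact h
end

section
/- Let R be a commutative ring with identity and M an R-module. Every maximal (proper) submodule of M is a strongly prime submodule of M. -/
/-- Every maximal (proper) submodule of `M` is strongly prime. -/
theorem Submodule.IsStronglyPrime.of_isCoatom
    {R M : Type*} [CommRing R] [AddCommGroup M] [Module R M]
    (P : Submodule R M) (hP : IsCoatom P) : P.IsStronglyPrime := by
  refine ⟨hP.1, fun x y h => ?_⟩
  by_cases hx : x ∈ P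
  · exact Or.inl hx
  · right
    have htop : P ⊔ Submodule.span R {x} = ⊤ := by
      apply hP.2
      refine lt_of_le_of_ne le_sup_left fun heq => hx ?_
      have : x ∈ P ⊔ Submodule.span R {x} :=
        Submodule.mem_sup_right (Submodule.mem_span_singleton_self x)
      rwa [← heq] at this
    have := h 1 (fun m => by simp [htop])
    simpa using this
end

section
/- Let R be a commutative ring with identity and 𝔭 a prime ideal of R. Then 𝔭 × 𝔭 is not a strongly semiprime submodule of the R-module R × R (in particular it is not strongly prime): for the element x = (1,0) one has I_x^{𝔭×𝔭} · x ⊆ 𝔭 × 𝔭 while (1,0) ∉ 𝔭 × 𝔭. -/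
/-- A proper submodule `C` of `M` is *strongly semiprime* if whenever
`I_x^C • x ⊆ C` (where `I_x^C = (C + Rx : M)`), we have `x ∈ C`. -/
def Submodule.IsStronglySemiprime {R M : Type*} [CommRing R] [AddCommGroup M] [Module R M]
    (C : Submodule R M) : Prop :=
  C ≠ ⊤ ∧ ∀ x : M,
    (∀ r : R, (∀ m : M, r • m ∈ C ⊔ Submodule.span R {x}) → r • x ∈ C) → x ∈ C

/-- If `𝔭` is a prime ideal of `R`, then `𝔭 × 𝔭` is not a strongly semiprime submodule of
`R × R`: for `x = (1,0)` we have `I_x^{𝔭×𝔭} • x ⊆ 𝔭 × 𝔭`, yet `(1,0) ∉ 𝔭 × 𝔭`. -/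
theorem prod_not_isStronglySemiprime {R : Type*} [CommRing R] (𝔭 : Ideal R) (h𝔭 : 𝔭.IsPrime) :
    ¬ (Submodule.prod (𝔭 : Submodule R R) (𝔭 : Submodule R R)).IsStronglySemiprime ∧
    (∀ r : R, (∀ m : R × R,
        r • m ∈ Submodule.prod (𝔭 : Submodule R R) 𝔭 ⊔ Submodule.span R {((1 : R), (0 : R))}) →
      r • ((1 : R), (0 : R)) ∈ Submodule.prod (𝔭 : Submodule R R) 𝔭) ∧
    ((1 : R), (0 : R)) ∉ Submodule.prod (𝔭 : Submodule R R) 𝔭 := by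
  have hnm : ((1 : R), (0 : R)) ∉ Submodule.prod (𝔭 : Submodule R R) 𝔭 := by
    intro h
    exact h𝔭.ne_top (Ideal.eq_top_of_isUnit_mem _ h.1 isUnit_one)
  have hI : ∀ r : R, (∀ m : R × R,
      r • m ∈ Submodule.prod (𝔭 : Submodule R R) 𝔭 ⊔ Submodule.span R {((1 : R), (0 : R))}) →
      r • ((1 : R), (0 : R)) ∈ Submodule.prod (𝔭 : Submodule R R) 𝔭 := by
    intro r hr
    have h01 := hr ((0 : R), (1 : R))
    rw [Submodule.mem_sup] at h01
    obtain ⟨c, hc, z, hz, hsum⟩ := h01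
    rw [Submodule.mem_span_singleton] at hz
    obtain ⟨t, rfl⟩ := hz
    have h2 : r = c.2 := by
      have := congrArg Prod.snd hsum
      simpa using this.symm
    have hrp : r ∈ 𝔭 := h2 ▸ hc.2
    exact ⟨by simpa using hrp, by simp⟩
  exact ⟨fun h => hnm (h.2 _ hI), hI, hnm⟩
end

section
/- Let V be a vector space over a field F. A subspace W of V is a strongly prime submodule of the F-module V if and only if W is a maximal subspace of V. -/
/-- For a vector space `V` over a field `F`, a subspace is strongly prime iff it is a
maximal (proper) subspace. -/
theorem isStronglyPrime_iff_isCoatom {F V : Type*} [Field F] [AddCommGroup V] [Module F V]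
    (W : Submodule F V) : W.IsStronglyPrime ↔ IsCoatom W := by
  constructor
  · rintro ⟨hne, hsp⟩
    have key : ∀ x : V, x ∉ W → W ⊔ Submodule.span F {x} = ⊤ := by
      intro x hx
      by_contra htop
      obtain ⟨y, hy⟩ : ∃ y : V, y ∉ W ⊔ Submodule.span F {x} := by
        by_contra h
        push_neg at h
        exact htop (Submodule.eq_top_iff'.2 h)
      rcases hsp x y (fun r hr => by
        rcases eq_or_ne r 0 with rfl | hr0
        · simp
        · exact absurd ((Submodule.smul_mem_iff _ hr0).1 (hr y)) hy) with h | h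
      · exact hx h
      · exact hy (Submodule.mem_sup_left h)
    refine ⟨hne, fun U hU => ?_⟩
    obtain ⟨x, hxU, hxW⟩ := SetLike.exists_of_lt hU
    have := key x hxW
    have hle : W ⊔ Submodule.span F {x} ≤ U :=
      sup_le hU.le ((Submodule.span_singleton_le_iff_mem x U).2 hxU)
    exact top_le_iff.1 (this ▸ hle)
  · rintro ⟨hne, hmax⟩
    refine ⟨hne, fun x y h => ?_⟩
    by_cases hx : x ∈ W
    · exact Or.inl hx
    · have htop : W ⊔ Submodule.span F {x} = ⊤ := by
        apply hmax
        refine lt_of_le_of_ne le_sup_left fun heq => ?_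
        exact hx (heq ▸ Submodule.mem_sup_right (Submodule.mem_span_singleton_self x))
      have := h 1 (fun m => by simp [htop])
      simpa using Or.inr this
end

section
/- Let R be a commutative ring with identity. The following statements are equivalent: (1) every nonzero R-module has a maximal submodule; (2) every nonzero R-module has a strongly prime submodule; (3) every nonzero R-module has a prime submodule; (4) every nonzero R-module has a semiprime submodule. -/
universe u v

/-- A proper submodule `N` of `M` is *semiprime* if `r² • x ∈ N` implies `r • x ∈ N`. -/
def Submodule.IsSemiprimeSubmodule {R M : Type*} [CommRing R] [AddCommGroup M] [Module R M]
    (N : Submodule R M) : Prop :=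
  N ≠ ⊤ ∧ ∀ (r : R) (x : M), (r * r) • x ∈ N → r • x ∈ N

/-! Maximal ⇒ strongly prime ⇒ prime ⇒ semiprime gives (1) ⇒ (2) ⇒ (3) ⇒ (4).

Conversely, a module on which some `c` acts surjectively and locally nilpotently, such as
`W[1/c] ⧸ W`, has no semiprime submodule. So under (4) this module vanishes: for every `z ∈ W`
there are `w, l` with `c ^ (l + 1) • w = c ^ l • z`. Given `M ≠ 0`, pick a maximal ideal `m`
containing the annihilator of some `x ≠ 0`. Applied to the cyclic `R_m`-submodules of `M_m ≠ 0`,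
where `1 - c * a` is a unit for `c ∈ m`, this shows that every `c ∈ m` acts locally nilpotently
on `M_m`. Hence `m` kills `M_m ⧸ P` for a semiprime `P`, an `R ⧸ m`-vector space receiving a
nonzero map from `M`; a maximal subspace of its image pulls back to a maximal submodule of `M`. -/

universe w

namespace Submodule

variable {R M : Type*} [CommRing R] [AddCommGroup M] [Module R M] {P : Submodule R M}

theorem isStronglyPrime_of_isCoatom (hP : IsCoatom P) : P.IsStronglyPrime := by
  refine ⟨hP.1, fun x y hxy => or_iff_not_imp_left.mpr fun hx => ?_⟩
  have hsup : P ⊔ span R {x} = ⊤ := hP.2 _ <| left_lt_sup.mpr fun h =>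
    hx (h (mem_span_singleton_self x))
  simpa using hxy 1 fun m => hsup ▸ mem_top

theorem IsStronglyPrime.isPrimeSubmodule_s5 (hP : P.IsStronglyPrime) : P.IsPrimeSubmodule := by
  refine ⟨hP.1, fun r x hrx => or_iff_not_imp_left.mpr fun hx m => ?_⟩
  refine (hP.2 x (r • m) fun s hs => ?_).resolve_left hx
  obtain ⟨p, hp, q, hq, hpq⟩ := mem_sup.mp (hs m)
  obtain ⟨t, rfl⟩ := mem_span_singleton.mp hq
  rw [smul_comm, ← hpq, smul_add, smul_comm r t]
  exact add_mem (smul_mem _ _ hp) (smul_mem _ _ hrx)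

theorem IsPrimeSubmodule.isSemiprimeSubmodule (hP : P.IsPrimeSubmodule) :
    P.IsSemiprimeSubmodule :=
  ⟨hP.1, fun r x hx => (hP.2 r (r • x) (mul_smul r r x ▸ hx)).elim id (· x)⟩

theorem IsSemiprimeSubmodule.smul_mem_of_pow_smul_mem (hP : P.IsSemiprimeSubmodule) {c : R}
    {x : M} : ∀ {k : ℕ}, c ^ k • x ∈ P → c • x ∈ P
  | 0, h => P.smul_mem c (by simpa using h)
  | 1, h => by simpa using h
  | k + 2, h => hP.smul_mem_of_pow_smul_mem (k := k + 1) <| by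
      have := hP.2 c (c ^ k • x) (by rwa [smul_smul, ← sq, ← pow_add, add_comm])
      rwa [smul_smul, ← pow_succ'] at this

theorem IsSemiprimeSubmodule.comap_linearEquiv {N : Type*} [AddCommGroup N] [Module R N]
    {P : Submodule R N} (hP : P.IsSemiprimeSubmodule) (e : M ≃ₗ[R] N) :
    (P.comap (e : M →ₗ[R] N)).IsSemiprimeSubmodule :=
  ⟨fun h => hP.1 <| comap_injective_of_surjective e.surjective (h.trans (comap_top _).symm),
    fun r x hx => by simpa using hP.2 r (e x) (by simpa using hx)⟩

theorem not_isSemiprimeSubmodule_of_smul_surjective {c : R}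
    (hsurj : Function.Surjective (c • · : M → M)) (htors : ∀ x : M, ∃ k : ℕ, c ^ k • x = 0) :
    ¬P.IsSemiprimeSubmodule := fun hP => hP.1 <| eq_top_iff'.mpr fun x => by
  obtain ⟨y, rfl⟩ := hsurj x
  obtain ⟨k, hk⟩ := htors y
  exact hP.smul_mem_of_pow_smul_mem (hk ▸ P.zero_mem)

end Submodule

namespace LocalizedModule

variable {R M : Type*} [CommRing R] [AddCommGroup M] [Module R M]

instance small [Small.{w} M] (S : Submonoid R) : Small.{w} (LocalizedModule S M) := by
  -- `mk m s` depends on `s` only through its action on `M`, and there are few such actions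
  let act : S → M → M := fun s m => s • m
  refine small_of_surjective (f := fun p : M × Set.range act => mk p.1 p.2.2.choose) ?_
  intro n
  induction n using induction_on with
  | _ m s =>
    have hs : act (⟨act s, s, rfl⟩ : Set.range act).2.choose = act s :=
      (⟨act s, s, rfl⟩ : Set.range act).2.choose_spec
    exact ⟨(m, ⟨act s, s, rfl⟩), mk_eq.mpr ⟨1, by simpa [act] using (congrFun hs m).symm⟩⟩

variable (M) in
abbrev AwayQuotient (c : R) : Type _ :=
  LocalizedModule (Submonoid.powers c) M ⧸ LinearMap.range (mkLinearMap (Submonoid.powers c) M)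

namespace AwayQuotient

variable {c : R}

instance small [Small.{w} M] : Small.{w} (AwayQuotient M c) :=
  small_of_surjective (Submodule.Quotient.mk_surjective _)

theorem smul_surjective : Function.Surjective (c • · : AwayQuotient M c → AwayQuotient M c) := by
  intro ζ
  obtain ⟨n, rfl⟩ := Submodule.Quotient.mk_surjective _ ζ
  induction n using induction_on with
  | _ m s =>
    refine ⟨Submodule.Quotient.mk (mk m (⟨c, Submonoid.mem_powers c⟩ * s)), ?_⟩
    simp only [← Submodule.Quotient.mk_smul, smul'_mk]
    exact congrArg _ (mk_cancel_common_left ⟨c, _⟩ s m)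

theorem exists_pow_smul_eq_zero (ζ : AwayQuotient M c) : ∃ k : ℕ, c ^ k • ζ = 0 := by
  obtain ⟨n, rfl⟩ := Submodule.Quotient.mk_surjective _ ζ
  induction n using induction_on with
  | _ m s =>
    obtain ⟨k, hk⟩ := s.2
    refine ⟨k, (Submodule.Quotient.mk_eq_zero _).mpr ⟨m, ?_⟩⟩
    change mk m 1 = c ^ k • mk m s
    rw [smul'_mk, ← mk_cancel s m, Submonoid.smul_def, ← hk]

theorem nontrivial {z : M} (hz : ∀ (m : M) (l : ℕ), c ^ (l + 1) • m ≠ c ^ l • z) :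
    Nontrivial (AwayQuotient M c) := by
  refine nontrivial_of_ne (Submodule.Quotient.mk (mk z ⟨c, Submonoid.mem_powers c⟩)) 0 fun h => ?_
  obtain ⟨m, hm⟩ := (Submodule.Quotient.mk_eq_zero _).mp h
  obtain ⟨⟨_, l, rfl⟩, hu⟩ := mk_eq.mp hm
  refine hz m l ?_
  simpa [Submonoid.smul_def, smul_smul, pow_succ] using hu

end AwayQuotient

end LocalizedModule

theorem IsLocalRing.pow_smul_eq_zero_of_pow_succ_smul_eq {A N : Type*} [CommRing A]
    [IsLocalRing A] [AddCommGroup N] [Module A N] {c : A} (hc : c ∈ IsLocalRing.maximalIdeal A)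
    {z w : N} (hw : w ∈ Submodule.span A {z}) {l : ℕ} (h : c ^ (l + 1) • w = c ^ l • z) :
    c ^ l • z = 0 := by
  obtain ⟨a, rfl⟩ := Submodule.mem_span_singleton.mp hw
  have hunit : IsUnit (1 - c * a) :=
    IsLocalRing.isUnit_one_sub_self_of_mem_nonunits _ (Ideal.mul_mem_right a _ hc)
  rw [← hunit.smul_eq_zero]
  calc (1 - c * a) • c ^ l • z = c ^ l • z - c ^ (l + 1) • a • z := by module
    _ = 0 := by rw [h, sub_self]

namespace Module.IsTorsionBySet

variable {R V : Type*} [CommRing R] [AddCommGroup V] [Module R V] {m : Ideal R}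

theorem isSemisimpleModule_of_isMaximal [m.IsMaximal] (hV : IsTorsionBySet R V m) :
    IsSemisimpleModule R V := by
  let := hV.module
  let := Ideal.Quotient.field m
  exact hV.isSemisimpleModule_iff.mp inferInstance

theorem eq_zero_of_smul_eq_zero (hm : m.IsMaximal) (hV : IsTorsionBySet R V m) {s : R}
    (hs : s ∉ m) {v : V} (h : s • v = 0) : v = 0 := by
  obtain ⟨b, i, hi, hbi⟩ := hm.exists_inv hs
  calc v = (b * s + i) • v := by rw [hbi, one_smul]
    _ = 0 := by rw [add_smul, mul_smul, h, smul_zero, zero_add, @hV v ⟨i, hi⟩]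

end Module.IsTorsionBySet

theorem LinearMap.exists_isCoatom_of_isTorsionBySet {R M V : Type*} [CommRing R] [AddCommGroup M]
    [Module R M] [AddCommGroup V] [Module R V] {m : Ideal R} [m.IsMaximal]
    (hV : Module.IsTorsionBySet R V m) {f : M →ₗ[R] V} (hf : f ≠ 0) :
    ∃ P : Submodule R M, IsCoatom P := by
  have := hV.isSemisimpleModule_of_isMaximal
  have : Nontrivial (range f) := Submodule.nontrivial_iff_ne_bot.mpr (range_eq_bot.not.mpr hf)
  obtain ⟨U, hU, -⟩ := (eq_top_or_exists_le_coatom (⊥ : Submodule R (range f))).resolve_left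
    bot_ne_top
  exact ⟨U.comap f.rangeRestrict, (Submodule.isCoatom_comap_iff f.surjective_rangeRestrict).mpr hU⟩

section SemiprimeSubmodules

variable {R : Type u} [CommRing R]

theorem exists_isSemiprimeSubmodule_of_small
    (H : ∀ (X : Type v) [AddCommGroup X] [Module R X], Nontrivial X →
      ∃ P : Submodule R X, P.IsSemiprimeSubmodule)
    (X : Type w) [AddCommGroup X] [Module R X] [Small.{v} X] [Nontrivial X] :
    ∃ P : Submodule R X, P.IsSemiprimeSubmodule := by
  obtain ⟨P, hP⟩ := H (Shrink.{v} X) (equivShrink X).symm.nontrivial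
  exact ⟨_, hP.comap_linearEquiv (Shrink.linearEquiv R X).symm⟩

theorem exists_pow_succ_smul_eq_pow_smul
    (H : ∀ (X : Type v) [AddCommGroup X] [Module R X], Nontrivial X →
      ∃ P : Submodule R X, P.IsSemiprimeSubmodule)
    {W : Type w} [AddCommGroup W] [Module R W] [Small.{v} W] (c : R) (z : W) :
    ∃ (w : W) (l : ℕ), c ^ (l + 1) • w = c ^ l • z := by
  by_contra! hz
  have := LocalizedModule.AwayQuotient.nontrivial hz
  obtain ⟨P, hP⟩ := exists_isSemiprimeSubmodule_of_small H (LocalizedModule.AwayQuotient W c)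
  exact Submodule.not_isSemiprimeSubmodule_of_smul_surjective
    LocalizedModule.AwayQuotient.smul_surjective
    LocalizedModule.AwayQuotient.exists_pow_smul_eq_zero hP

theorem exists_pow_smul_eq_zero_of_algebraMap_mem_maximalIdeal
    (H : ∀ (X : Type v) [AddCommGroup X] [Module R X], Nontrivial X →
      ∃ P : Submodule R X, P.IsSemiprimeSubmodule)
    {A N : Type*} [CommRing A] [IsLocalRing A] [Algebra R A] [AddCommGroup N] [Module A N]
    [Module R N] [IsScalarTower R A N] [Small.{v} N] {c : R}
    (hc : algebraMap R A c ∈ IsLocalRing.maximalIdeal A) (z : N) :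
    ∃ k : ℕ, c ^ k • z = 0 := by
  let W := (Submodule.span A {z}).restrictScalars R
  obtain ⟨w, l, hwl⟩ :=
    exists_pow_succ_smul_eq_pow_smul H c (⟨z, Submodule.mem_span_singleton_self z⟩ : W)
  have h : algebraMap R A c ^ (l + 1) • (w : N) = algebraMap R A c ^ l • z := by
    simpa only [← map_pow, algebraMap_smul, Submodule.coe_smul_of_tower] using
      congrArg Subtype.val hwl
  exact ⟨l, by simpa only [← map_pow, algebraMap_smul] using
    IsLocalRing.pow_smul_eq_zero_of_pow_succ_smul_eq hc w.2 h⟩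

theorem exists_isCoatom_of_forall_exists_isSemiprimeSubmodule
    (H : ∀ (X : Type v) [AddCommGroup X] [Module R X], Nontrivial X →
      ∃ P : Submodule R X, P.IsSemiprimeSubmodule)
    (M : Type v) [AddCommGroup M] [Module R M] [Nontrivial M] :
    ∃ P : Submodule R M, IsCoatom P := by
  obtain ⟨x, hx⟩ := exists_ne (0 : M)
  obtain ⟨m, hm, hxm⟩ := Ideal.exists_le_maximal (LinearMap.ker (LinearMap.toSpanSingleton R M x))
    fun h => hx (by simpa using (LinearMap.ker _).eq_top_iff'.mp h 1)
  have := hm.isPrime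
  let S := m.primeCompl
  let N := LocalizedModule S M
  have : Nontrivial N := nontrivial_of_ne (LocalizedModule.mkLinearMap S M x) 0 fun h => by
    obtain ⟨s, hs⟩ := (IsLocalizedModule.eq_zero_iff S _).mp h
    exact s.2 (hxm hs)
  obtain ⟨P, hP⟩ := exists_isSemiprimeSubmodule_of_small H N
  have hV : Module.IsTorsionBySet R (N ⧸ P) m := fun v ⟨c, hc⟩ => by
    obtain ⟨n, rfl⟩ := Submodule.Quotient.mk_surjective P v
    obtain ⟨k, hk⟩ := exists_pow_smul_eq_zero_of_algebraMap_mem_maximalIdeal H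
      (A := Localization.AtPrime m) ((IsLocalization.AtPrime.to_map_mem_maximal_iff _ m c).mpr hc) n
    exact (Submodule.Quotient.mk_eq_zero P).mpr (hP.smul_mem_of_pow_smul_mem (hk ▸ P.zero_mem))
  refine LinearMap.exists_isCoatom_of_isTorsionBySet hV
    (f := P.mkQ ∘ₗ LocalizedModule.mkLinearMap S M) fun hf => hP.1 ?_
  refine Submodule.eq_top_iff'.mpr fun n => ?_
  induction n using LocalizedModule.induction_on with
  | _ w s =>
    rw [← Submodule.Quotient.mk_eq_zero]
    refine hV.eq_zero_of_smul_eq_zero hm s.2 ?_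
    rw [← Submodule.Quotient.mk_smul, LocalizedModule.smul'_mk, ← Submonoid.smul_def,
      LocalizedModule.mk_cancel]
    exact LinearMap.congr_fun hf w

end SemiprimeSubmodules

/-- Characterizations of Max-rings: the following are equivalent:
(1) every nonzero `R`-module has a maximal submodule;
(2) every nonzero `R`-module has a strongly prime submodule;
(3) every nonzero `R`-module has a prime submodule;
(4) every nonzero `R`-module has a semiprime submodule. -/
theorem maxRing_tfae (R : Type u) [CommRing R] :
    List.TFAE
      [∀ (M : Type v) [AddCommGroup M] [Module R M], Nontrivial M →
          ∃ P : Submodule R M, IsCoatom P,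
       ∀ (M : Type v) [AddCommGroup M] [Module R M], Nontrivial M →
          ∃ P : Submodule R M, P.IsStronglyPrime,
       ∀ (M : Type v) [AddCommGroup M] [Module R M], Nontrivial M →
          ∃ P : Submodule R M, P.IsPrimeSubmodule,
       ∀ (M : Type v) [AddCommGroup M] [Module R M], Nontrivial M →
          ∃ P : Submodule R M, P.IsSemiprimeSubmodule] := by
  tfae_have 1 → 2 := fun h M _ _ hM =>
    (h M hM).imp fun _ => Submodule.isStronglyPrime_of_isCoatom
  tfae_have 2 → 3 := fun h M _ _ hM =>
    (h M hM).imp fun _ => Submodule.IsStronglyPrime.isPrimeSubmodule_s5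
  tfae_have 3 → 4 := fun h M _ _ hM =>
    (h M hM).imp fun _ => Submodule.IsPrimeSubmodule.isSemiprimeSubmodule
  tfae_have 4 → 1 := fun h M _ _ _ => exists_isCoatom_of_forall_exists_isSemiprimeSubmodule h M
  tfae_finish
end

section
/- Let R be a commutative ring with identity, M an R-module, U a multiplicatively closed subset of R, and P a strongly prime submodule of M such that U⁻¹P ≠ U⁻¹M. Then U⁻¹P is a strongly prime submodule of the U⁻¹R-module U⁻¹M. -/
/-- Key consequence of strong primeness: if `r • z ∈ P` and `z ∉ P`, then `r • m ∈ P`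
for every `m`. -/
lemma Submodule.IsStronglyPrime.smul_mem_of_smul_mem
    {R M : Type*} [CommRing R] [AddCommGroup M] [Module R M] {P : Submodule R M}
    (hP : P.IsStronglyPrime) {r : R} {z : M} (hrz : r • z ∈ P) (hz : z ∉ P) (m : M) :
    r • m ∈ P := by
  have hI : ∀ s : R, (∀ m' : M, s • m' ∈ P ⊔ Submodule.span R {z}) → s • (r • m) ∈ P := by
    intro s hs
    obtain ⟨p, hp, q, hq, hpq⟩ := Submodule.mem_sup.mp (hs m)
    obtain ⟨c, rfl⟩ := Submodule.mem_span_singleton.mp hq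
    have : s • r • m = r • p + c • (r • z) := by
      rw [smul_comm s r, ← hpq, smul_add, smul_comm r c]
    rw [this]
    exact P.add_mem (P.smul_mem r hp) (P.smul_mem c hrz)
  rcases hP.2 z (r • m) hI with h | h
  · exact absurd h hz
  · exact h

/-- If `P` is a strongly prime submodule of `M` and `U⁻¹P ≠ U⁻¹M`, then `U⁻¹P` is a strongly
prime submodule of the `U⁻¹R`-module `U⁻¹M`. -/
theorem Submodule.IsStronglyPrime.localized
    {R M : Type*} [CommRing R] [AddCommGroup M] [Module R M] (U : Submonoid R)
    (P : Submodule R M) (hP : P.IsStronglyPrime) (hne : P.localized U ≠ ⊤) :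
    (P.localized U).IsStronglyPrime := by
  set f := LocalizedModule.mkLinearMap U M with hf
  -- elements of U act "regularly" modulo P
  have hU : ∀ u : U, ∀ z : M, (u : R) • z ∈ P → z ∈ P := by
    intro u z hz
    by_contra hzP
    apply hne
    rw [eq_top_iff]
    rintro w -
    obtain ⟨⟨m, s⟩, rfl⟩ := IsLocalizedModule.mk'_surjective U f w
    simp only [Function.uncurry_apply_pair]
    have hm : (u : R) • m ∈ P := hP.smul_mem_of_smul_mem hz hzP m
    refine ⟨(u : R) • m, hm, u * s, ?_⟩
    exact IsLocalizedModule.mk'_cancel_left f m u s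
  refine ⟨hne, ?_⟩
  intro x' y' H
  obtain ⟨⟨x, s⟩, rfl⟩ := IsLocalizedModule.mk'_surjective U f x'
  obtain ⟨⟨y, t⟩, rfl⟩ := IsLocalizedModule.mk'_surjective U f y'
  by_contra hcon
  push_neg at hcon
  obtain ⟨hx', hy'⟩ := hcon
  simp only [Function.uncurry_apply_pair] at H hx' hy'
  have hx : x ∉ P := fun h => hx' ⟨x, h, s, rfl⟩
  have hy : y ∉ P := fun h => hy' ⟨y, h, t, rfl⟩
  have key : ∀ r : R, (∀ m : M, r • m ∈ P ⊔ Submodule.span R {x}) → r • y ∈ P := by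
    intro r hr
    have hr' : ∀ z : LocalizedModule U M,
        algebraMap R (Localization U) r • z ∈
          P.localized U ⊔ Submodule.span (Localization U) {IsLocalizedModule.mk' f x s} := by
      intro z
      obtain ⟨⟨m, u⟩, rfl⟩ := IsLocalizedModule.mk'_surjective U f z
      simp only [Function.uncurry_apply_pair]
      have : algebraMap R (Localization U) r • IsLocalizedModule.mk' f m u
          = IsLocalizedModule.mk' f (r • m) u := by
        rw [algebraMap_smul, IsLocalizedModule.mk'_smul]
      rw [this]
      obtain ⟨p, hp, q, hq, hpq⟩ := Submodule.mem_sup.mp (hr m)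
      obtain ⟨c, rfl⟩ := Submodule.mem_span_singleton.mp hq
      rw [← hpq, IsLocalizedModule.mk'_add]
      refine Submodule.add_mem_sup ⟨p, hp, u, rfl⟩ ?_
      apply Submodule.mem_span_singleton.mpr
      refine ⟨IsLocalization.mk' (Localization U) (c * s : R) u, ?_⟩
      rw [IsLocalizedModule.mk'_smul_mk']
      have : (c * (s : R)) • x = s • (c • x) := by
        rw [Submonoid.smul_def, smul_smul, mul_comm]
      rw [this, mul_comm u s, IsLocalizedModule.mk'_cancel_left]
    have := H (algebraMap R (Localization U) r) hr'
    have hmem : IsLocalizedModule.mk' f (r • y) t ∈ P.localized U := by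
      have h2 : algebraMap R (Localization U) r • IsLocalizedModule.mk' f y t
          = IsLocalizedModule.mk' f (r • y) t := by
        rw [algebraMap_smul, IsLocalizedModule.mk'_smul]
      rwa [h2] at this
    obtain ⟨p, hp, v, hv⟩ := hmem
    rw [IsLocalizedModule.mk'_eq_mk'_iff] at hv
    obtain ⟨w, hw⟩ := hv
    -- hw : w • v • (r • y) = w • t • p
    have hwP : (w : R) • (v : R) • (r • y) ∈ P := by
      have : w • v • (r • y) = w • t • p := hw
      rw [Submonoid.smul_def, Submonoid.smul_def] at this
      rw [this]
      exact P.smul_mem _ (P.smul_mem _ hp)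
    exact hU v _ (hU w _ hwP)
  rcases hP.2 x y key with h | h
  · exact hx h
  · exact hy h
end

section
/- Let R be a commutative ring with identity, M a finitely generated R-module, and U a multiplicatively closed subset of R. The map P ↦ U⁻¹P is a bijection from {P | P is a strongly prime submodule of M and (P : M) ∩ U = ∅} onto the set of strongly prime submodules of the U⁻¹R-module U⁻¹M; moreover this bijection and its inverse both preserve inclusion (i.e., it is an order isomorphism with respect to inclusion). -/
section Aux

variable {R M : Type*} [CommRing R] [AddCommGroup M] [Module R M] (U : Submonoid R)

lemma mk_mem_localized_iff (P : Submodule R M) (m : M) (s : U) :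
    LocalizedModule.mk m s ∈ P.localized U ↔ ∃ u : U, (u : R) • m ∈ P := by
  constructor
  · rintro ⟨p, hp, t, ht⟩
    rw [← IsLocalizedModule.mk_eq_mk', LocalizedModule.mk_eq] at ht
    obtain ⟨u, hu⟩ := ht
    refine ⟨u * t, ?_⟩
    have : ((u * t : U) : R) • m = ((u * s : U) : R) • p := by
      simpa [Submonoid.smul_def, mul_smul] using hu.symm
    rw [this]
    exact P.smul_mem _ hp
  · rintro ⟨u, hu⟩
    refine ⟨(u : R) • m, hu, u * s, ?_⟩
    rw [← IsLocalizedModule.mk_eq_mk', ← Submonoid.smul_def, LocalizedModule.mk_cancel_common_left]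

lemma mk_surj (ζ : LocalizedModule U M) : ∃ m : M, ∃ t : U, LocalizedModule.mk m t = ζ :=
  LocalizedModule.induction_on (fun m t => ⟨m, t, rfl⟩) ζ

lemma mk_mem_iff_mk_one_mem (W : Submodule (Localization U) (LocalizedModule U M)) (m : M)
    (s : U) : LocalizedModule.mk m s ∈ W ↔ LocalizedModule.mk m (1 : U) ∈ W := by
  constructor
  · intro h
    have := W.smul_mem (Localization.mk (s : R) 1) h
    rwa [LocalizedModule.mk_smul_mk, one_mul, ← Submonoid.smul_def,
      LocalizedModule.mk_cancel] at this
  · intro h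
    have := W.smul_mem (Localization.mk 1 s) h
    rwa [LocalizedModule.mk_smul_mk, mul_one, one_smul] at this

lemma mk_one_mem_of_smul_mem (W : Submodule (Localization U) (LocalizedModule U M)) (m : M)
    (u : U) (h : LocalizedModule.mk ((u : R) • m) (1 : U) ∈ W) :
    LocalizedModule.mk m (1 : U) ∈ W := by
  have := (mk_mem_iff_mk_one_mem U W ((u : R) • m) u).mpr h
  rwa [← Submonoid.smul_def, LocalizedModule.mk_cancel] at this

lemma colon_prime {P : Submodule R M} (hP : P.IsStronglyPrime) {a b : R}
    (hab : ∀ m : M, (a * b) • m ∈ P) (ha : ¬ ∀ m : M, a • m ∈ P) : ∀ m : M, b • m ∈ P := by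
  by_contra hb
  push_neg at ha hb
  obtain ⟨x, hx⟩ := ha
  obtain ⟨y, hy⟩ := hb
  have key : ∀ r : R, (∀ m' : M, r • m' ∈ P ⊔ Submodule.span R {a • x}) → r • (b • y) ∈ P := by
    intro r hr
    obtain ⟨p, hp, z, hz, hpz⟩ := Submodule.mem_sup.mp (hr y)
    obtain ⟨c, rfl⟩ := Submodule.mem_span_singleton.mp hz
    have : r • (b • y) = b • p + c • ((a * b) • x) := by
      rw [smul_comm r b, ← hpz, smul_add]
      congr 1
      simp only [smul_smul]
      ring_nf
    rw [this]
    exact P.add_mem (P.smul_mem _ hp) (P.smul_mem _ (hab x))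
  rcases hP.2 (a • x) (b • y) key with h | h
  · exact hx h
  · exact hy h

lemma saturated {P : Submodule R M} (hP : P.IsStronglyPrime)
    (hd : ∀ r : R, r ∈ U → ¬ (∀ m : M, r • m ∈ P)) {u : R} (hu : u ∈ U) {m : M}
    (hum : u • m ∈ P) : m ∈ P := by
  by_contra hm
  have h2 := hP.2 m m
  have hne : ¬ (m ∈ P ∨ m ∈ P) := by tauto
  have hex : ∃ s : R, (∀ m' : M, s • m' ∈ P ⊔ Submodule.span R {m}) ∧ ¬ s • m ∈ P := by
    by_contra hc
    push_neg at hc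
    exact hne (h2 fun r hr => hc r hr)
  obtain ⟨s, hs1, hs2⟩ := hex
  have hcol : ∀ m' : M, (u * s) • m' ∈ P := by
    intro m'
    obtain ⟨p, hp, z, hz, hpz⟩ := Submodule.mem_sup.mp (hs1 m')
    obtain ⟨c, rfl⟩ := Submodule.mem_span_singleton.mp hz
    have : (u * s) • m' = u • p + c • (u • m) := by
      rw [mul_smul, ← hpz, smul_add, smul_comm u c]
    rw [this]
    exact P.add_mem (P.smul_mem _ hp) (P.smul_mem _ hum)
  exact hs2 (colon_prime hP hcol (hd u hu) m)

lemma exists_unif {N : Submodule R M} [Module.Finite R M] (r : R)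
    (h : ∀ m : M, ∃ u : U, ((u : R) * r) • m ∈ N) : ∃ u : U, ∀ m : M, ((u : R) * r) • m ∈ N := by
  obtain ⟨n, g, hg⟩ := Module.Finite.exists_fin (R := R) (M := M)
  choose u hu using fun i => h (g i)
  refine ⟨∏ i, u i, fun m => ?_⟩
  have hm : m ∈ Submodule.span R (Set.range g) := hg ▸ Submodule.mem_top
  induction hm using Submodule.span_induction with
  | mem x hx =>
      obtain ⟨i, rfl⟩ := hx
      have hprod : (u i : R) * ∏ j ∈ Finset.univ.erase i, (u j : R) = ((∏ j, u j : U) : R) := by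
        rw [← Finset.mul_prod_erase Finset.univ _ (Finset.mem_univ i)]
        push_cast
        ring
      have heq : ((∏ j, u j : U) : R) * r
          = (∏ j ∈ Finset.univ.erase i, (u j : R)) * ((u i : R) * r) := by
        rw [← hprod]; ring
      rw [heq, mul_smul]
      exact N.smul_mem _ (hu i)
  | zero => simp
  | add x y hx hy ihx ihy => rw [smul_add]; exact N.add_mem ihx ihy
  | smul a x hx ih => rw [smul_comm]; exact N.smul_mem _ ih

lemma localized_mono {P₁ P₂ : Submodule R M} (h : P₁ ≤ P₂) :
    P₁.localized U ≤ P₂.localized U := by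
  rintro ζ ⟨m, hm, s, rfl⟩
  exact ⟨m, h hm, s, rfl⟩

lemma le_of_localized_le {P₁ P₂ : Submodule R M} (h₂ : P₂.IsStronglyPrime)
    (hd₂ : ∀ r : R, r ∈ U → ¬ (∀ m : M, r • m ∈ P₂))
    (h : P₁.localized U ≤ P₂.localized U) : P₁ ≤ P₂ := by
  intro x hx
  have hmem : LocalizedModule.mk x (1 : U) ∈ P₂.localized U :=
    h ((mk_mem_localized_iff U P₁ x 1).mpr ⟨1, by simpa using hx⟩)
  obtain ⟨u, hu⟩ := (mk_mem_localized_iff U P₂ x 1).mp hmem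
  exact saturated U h₂ hd₂ u.2 hu


variable [Module.Finite R M]

lemma localized_isStronglyPrime {P : Submodule R M} (hP : P.IsStronglyPrime)
    (hd : ∀ r : R, r ∈ U → ¬ (∀ m : M, r • m ∈ P)) : (P.localized U).IsStronglyPrime := by
  constructor
  · intro htop
    have h1 : ∀ m : M, ∃ u : U, ((u : R) * 1) • m ∈ P := by
      intro m
      have hmem : LocalizedModule.mk m (1 : U) ∈ P.localized U := htop ▸ Submodule.mem_top
      obtain ⟨u, hu⟩ := (mk_mem_localized_iff U P m 1).mp hmem
      exact ⟨u, by simpa using hu⟩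
    obtain ⟨w, hw⟩ := exists_unif U 1 h1
    exact hd w w.2 fun m => by simpa using hw m
  · intro ξ η H
    obtain ⟨x, sx, rfl⟩ := mk_surj U ξ
    obtain ⟨y, sy, rfl⟩ := mk_surj U η
    have hyp' : ∀ r : R, (∀ m : M, r • m ∈ P ⊔ Submodule.span R {x}) → r • y ∈ P := by
      intro r hr
      have hpre : ∀ ζ : LocalizedModule U M, (Localization.mk r (1 : U)) • ζ ∈
          P.localized U ⊔ Submodule.span (Localization U) {LocalizedModule.mk x sx} := by
        intro ζ
        obtain ⟨m, t, rfl⟩ := mk_surj U ζ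
        rw [LocalizedModule.mk_smul_mk, one_mul, mk_mem_iff_mk_one_mem]
        obtain ⟨p, hp, z, hz, hpz⟩ := Submodule.mem_sup.mp (hr m)
        obtain ⟨c, rfl⟩ := Submodule.mem_span_singleton.mp hz
        rw [← hpz]
        have hsplit : LocalizedModule.mk (p + c • x) (1 : U)
            = LocalizedModule.mk p (1 : U)
              + (Localization.mk c (1 : U)) • LocalizedModule.mk x (1 : U) := by
          rw [LocalizedModule.mk_smul_mk, one_mul, LocalizedModule.mk_add_mk]
          simp
        rw [hsplit]
        refine Submodule.add_mem _ (Submodule.mem_sup_left ?_)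
          (Submodule.smul_mem _ _ (Submodule.mem_sup_right ?_))
        · exact (mk_mem_localized_iff U P p 1).mpr ⟨1, by simpa using hp⟩
        · exact (mk_mem_iff_mk_one_mem U _ x sx).mp (Submodule.mem_span_singleton_self _)
      have hcon := H (Localization.mk r (1 : U)) hpre
      rw [LocalizedModule.mk_smul_mk, one_mul] at hcon
      obtain ⟨u, hu⟩ := (mk_mem_localized_iff U P _ sy).mp hcon
      exact saturated U hP hd u.2 hu
    rcases hP.2 x y hyp' with h | h
    · exact Or.inl ((mk_mem_localized_iff U P x sx).mpr ⟨1, by simpa using h⟩)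
    · exact Or.inr ((mk_mem_localized_iff U P y sy).mpr ⟨1, by simpa using h⟩)

lemma exists_preimage {Q : Submodule (Localization U) (LocalizedModule U M)}
    (hQ : Q.IsStronglyPrime) :
    ∃ P : Submodule R M,
      (P.IsStronglyPrime ∧ ∀ r : R, r ∈ U → ¬ (∀ m : M, r • m ∈ P)) ∧ P.localized U = Q := by
  set P : Submodule R M := (Q.restrictScalars R).comap (LocalizedModule.mkLinearMap U M) with hPdef
  have hPm : ∀ m : M, m ∈ P ↔ LocalizedModule.mk m (1 : U) ∈ Q := fun m => Iff.rfl
  have htop : ¬ ∀ m : M, LocalizedModule.mk m (1 : U) ∈ Q := by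
    intro h
    apply hQ.1
    rw [eq_top_iff]
    rintro ζ -
    obtain ⟨m, t, rfl⟩ := mk_surj U ζ
    rw [mk_mem_iff_mk_one_mem]
    exact h m
  have hd : ∀ r : R, r ∈ U → ¬ (∀ m : M, r • m ∈ P) := by
    intro r hr hall
    exact htop fun m => mk_one_mem_of_smul_mem U Q m ⟨r, hr⟩ ((hPm _).mp (hall m))
  have hsp : P.IsStronglyPrime := by
    constructor
    · intro h
      exact htop fun m => (hPm m).mp (h ▸ Submodule.mem_top)
    · intro x y hxy
      have key : ∀ ρ : Localization U,
          (∀ ζ, ρ • ζ ∈ Q ⊔ Submodule.span (Localization U) {LocalizedModule.mk x (1 : U)}) →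
            ρ • LocalizedModule.mk y (1 : U) ∈ Q := by
        intro ρ hρ
        obtain ⟨r, s, rfl⟩ : ∃ r s, ρ = Localization.mk r s :=
          Localization.induction_on ρ fun p => ⟨p.1, p.2, rfl⟩
        have hgen : ∀ m : M, ∃ u : U, ((u : R) * r) • m ∈ P ⊔ Submodule.span R {x} := by
          intro m
          have h1 := hρ (LocalizedModule.mk m 1)
          rw [LocalizedModule.mk_smul_mk, mul_one, mk_mem_iff_mk_one_mem] at h1
          obtain ⟨q, hq, z, hz, hqz⟩ := Submodule.mem_sup.mp h1
          obtain ⟨σ, rfl⟩ := Submodule.mem_span_singleton.mp hz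
          obtain ⟨c, t, rfl⟩ : ∃ c t, σ = Localization.mk c t :=
            Localization.induction_on σ fun p => ⟨p.1, p.2, rfl⟩
          rw [LocalizedModule.mk_smul_mk, mul_one] at hqz
          set z := (t : R) • (r • m) - c • x with hzdef
          have hsum : LocalizedModule.mk z t + LocalizedModule.mk (c • x) t
              = LocalizedModule.mk (r • m) (1 : U) := by
            rw [LocalizedModule.mk_add_mk]
            have h1' : t • z + t • (c • x) = t • ((t : R) • (r • m)) := by
              rw [← smul_add]
              congr 1
              rw [hzdef, sub_add_cancel]
            rw [h1', LocalizedModule.mk_cancel_common_left, ← Submonoid.smul_def,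
              LocalizedModule.mk_cancel]
          have hqeq : LocalizedModule.mk z t = q :=
            (eq_sub_of_add_eq hsum).trans (eq_sub_of_add_eq hqz).symm
          have hzP : z ∈ P := (hPm z).mpr ((mk_mem_iff_mk_one_mem U Q z t).mp (hqeq ▸ hq))
          refine ⟨t, ?_⟩
          have : ((t : R) * r) • m = z + c • x := by
            rw [mul_smul, hzdef, sub_add_cancel]
          rw [this]
          exact Submodule.add_mem _ (Submodule.mem_sup_left hzP)
            (Submodule.mem_sup_right (Submodule.smul_mem _ _ (Submodule.mem_span_singleton_self x)))
        obtain ⟨w, hw⟩ := exists_unif U r hgen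
        have hy : ((w : R) * r) • y ∈ P := hxy _ hw
        rw [mul_smul] at hy
        rw [LocalizedModule.mk_smul_mk, mul_one, mk_mem_iff_mk_one_mem]
        exact mk_one_mem_of_smul_mem U Q _ w ((hPm _).mp hy)
      rcases hQ.2 _ _ key with h | h
      · exact Or.inl ((hPm x).mpr h)
      · exact Or.inr ((hPm y).mpr h)
  refine ⟨P, ⟨hsp, hd⟩, ?_⟩
  ext ζ
  obtain ⟨m, t, rfl⟩ := mk_surj U ζ
  rw [mk_mem_localized_iff, mk_mem_iff_mk_one_mem U Q]
  constructor
  · rintro ⟨u, hu⟩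
    exact mk_one_mem_of_smul_mem U Q m u ((hPm _).mp hu)
  · intro h
    exact ⟨1, by simpa using (hPm m).mpr h⟩

end Aux

/-- For a finitely generated module `M`, the map `P ↦ U⁻¹P` is a bijection from the strongly
prime submodules of `M` with `(P : M) ∩ U = ∅` onto the strongly prime submodules of `U⁻¹M`,
and this bijection together with its inverse preserves inclusion. -/
theorem stronglyPrime_localized_orderIso
    {R M : Type*} [CommRing R] [AddCommGroup M] [Module R M] [Module.Finite R M]
    (U : Submonoid R) :
    Set.BijOn (fun P : Submodule R M => P.localized U)
      {P : Submodule R M | P.IsStronglyPrime ∧ ∀ r : R, r ∈ U → ¬ (∀ m : M, r • m ∈ P)}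
      {Q : Submodule (Localization U) (LocalizedModule U M) | Q.IsStronglyPrime} ∧
    ∀ P₁ ∈ {P : Submodule R M | P.IsStronglyPrime ∧ ∀ r : R, r ∈ U → ¬ (∀ m : M, r • m ∈ P)},
      ∀ P₂ ∈ {P : Submodule R M | P.IsStronglyPrime ∧ ∀ r : R, r ∈ U → ¬ (∀ m : M, r • m ∈ P)},
        (P₁ ≤ P₂ ↔ P₁.localized U ≤ P₂.localized U) := by
  constructor
  · refine ⟨fun P hP => localized_isStronglyPrime U hP.1 hP.2, ?_, ?_⟩
    · intro P₁ h₁ P₂ h₂ heq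
      exact le_antisymm
        (le_of_localized_le U h₂.1 h₂.2 (le_of_eq heq))
        (le_of_localized_le U h₁.1 h₁.2 (le_of_eq heq.symm))
    · intro Q hQ
      obtain ⟨P, hPA, hloc⟩ := exists_preimage U hQ
      exact ⟨P, hPA, hloc⟩
  · intro P₁ h₁ P₂ h₂
    exact ⟨fun h => localized_mono U h, fun h => le_of_localized_le U h₂.1 h₂.2 h⟩
end

section
/- Let R be a commutative ring with identity, M an R-module, and C a strongly semiprime submodule of M. Then C is the intersection of all strongly prime submodules of M containing C; equivalently, the strongly prime radical s-rad(C) of C satisfies s-rad(C) ⊆ C. -/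
open Submodule in
theorem exists_stronglyPrime_not_mem
    {R M : Type*} [CommRing R] [AddCommGroup M] [Module R M]
    (C : Submodule R M) (hC : C.IsStronglySemiprime) {x : M} (hx : x ∉ C) :
    ∃ P : Submodule R M, P.IsStronglyPrime ∧ C ≤ P ∧ x ∉ P := by
  have step : ∀ y : M, y ∉ C → ∃ s : R,
      (∀ m : M, s • m ∈ C ⊔ span R {y}) ∧ s • y ∉ C := by
    intro y hy
    by_contra h
    push_neg at h
    exact hy (hC.2 y h)
  choose r hr1 hr2 using step
  set xs : ℕ → {y : M // y ∉ C} :=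
    fun n => Nat.rec ⟨x, hx⟩ (fun _ p => ⟨r p.1 p.2 • p.1, hr2 p.1 p.2⟩) n with hxs
  have hsucc : ∀ n, (xs (n + 1)).1 = r (xs n).1 (xs n).2 • (xs n).1 := fun n => rfl
  have hmono : ∀ i j, i ≤ j → (xs j).1 ∈ span R {(xs i).1} := by
    intro i j hij
    induction j, hij using Nat.le_induction with
    | base => exact mem_span_singleton_self _
    | succ n hn ih => rw [hsucc]; exact Submodule.smul_mem _ _ ih
  -- Zorn
  set S : Set (Submodule R M) := {P | C ≤ P ∧ ∀ n, (xs n).1 ∉ P} with hS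
  obtain ⟨P, hCP', hP⟩ := zorn_le_nonempty₀ S (fun c hcS hc y hyc => by
    refine ⟨sSup c, ⟨le_trans (hcS hyc).1 (le_sSup hyc), fun n hn => ?_⟩,
      fun z hz => le_sSup hz⟩
    obtain ⟨N, hNc, hN⟩ := (mem_sSup_of_directed ⟨y, hyc⟩ hc.directedOn).1 hn
    exact (hcS hNc).2 n hN) C ⟨le_rfl, fun n hn => (xs n).2 hn⟩
  have hPS : P ∈ S := hP.1
  refine ⟨P, ⟨?_, ?_⟩, hPS.1, fun hxP => hPS.2 0 hxP⟩
  · intro h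
    exact hPS.2 0 (h ▸ Submodule.mem_top)
  · intro a b H
    by_contra hab
    push_neg at hab
    obtain ⟨ha, hb⟩ := hab
    -- P ⊔ span{a} escapes S
    have escape : ∀ w : M, w ∉ P → ∃ n, (xs n).1 ∈ P ⊔ span R {w} := by
      intro w hw
      by_contra h
      push_neg at h
      have hmem : P ⊔ span R {w} ∈ S :=
        ⟨le_trans hPS.1 le_sup_left, h⟩
      have := hP.2 hmem le_sup_left
      exact hw (this (le_sup_right (α := Submodule R M) (Submodule.mem_span_singleton_self w)))
    obtain ⟨m, hm⟩ := escape a ha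
    obtain ⟨n, hn⟩ := escape b hb
    set k := max m n with hk
    have hka : (xs k).1 ∈ P ⊔ span R {a} :=
      (span_singleton_le_iff_mem _ _ |>.2 hm) (hmono m k (le_max_left m n))
    have hkb : (xs k).1 ∈ P ⊔ span R {b} :=
      (span_singleton_le_iff_mem _ _ |>.2 hn) (hmono n k (le_max_right m n))
    set s := r (xs k).1 (xs k).2 with hs'
    have hsb : s • b ∈ P := by
      apply H
      intro m'
      have : C ⊔ span R {(xs k).1} ≤ P ⊔ span R {a} :=
        sup_le (le_trans hPS.1 le_sup_left) ((span_singleton_le_iff_mem _ _).2 hka)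
      exact this (hr1 (xs k).1 (xs k).2 m')
    -- xs k = p + t • b
    obtain ⟨p, hpP, z, hz, hpz⟩ := Submodule.mem_sup.1 hkb
    obtain ⟨t, rfl⟩ := mem_span_singleton.1 hz
    have : (xs (k + 1)).1 ∈ P := by
      rw [hsucc, ← hs', ← hpz, smul_add, smul_comm s t b]
      exact Submodule.add_mem _ (Submodule.smul_mem _ _ hpP)
        (Submodule.smul_mem _ _ hsb)
    exact hPS.2 (k + 1) this

/-- Every strongly semiprime submodule `C` is the intersection of the strongly prime
submodules containing it; equivalently `s-rad(C) ⊆ C`. -/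
theorem isStronglySemiprime_eq_sInf
    {R M : Type*} [CommRing R] [AddCommGroup M] [Module R M]
    (C : Submodule R M) (hC : C.IsStronglySemiprime) :
    C = sInf {P : Submodule R M | P.IsStronglyPrime ∧ C ≤ P} := by
  refine le_antisymm (le_sInf fun P hP => hP.2) fun x hx => ?_
  by_contra hxC
  obtain ⟨P, hP, hCP, hxP⟩ := exists_stronglyPrime_not_mem C hC hxC
  exact hxP (Submodule.mem_sInf.1 hx P ⟨hP, hCP⟩)
end

section
/- Let R be a commutative ring with identity, M an R-module, and P₀ ⊊ P₁ strongly prime submodules of M. Then (P₀ : M) ⊊ (P₁ : M), i.e., the containment of annihilator ideals is strict. -/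
/-- A strict inclusion `P₀ ⊊ P₁` of strongly prime submodules induces a strict inclusion
`(P₀ : M) ⊊ (P₁ : M)` of the corresponding ideals. -/
theorem colon_lt_colon_of_stronglyPrime_lt
    {R M : Type*} [CommRing R] [AddCommGroup M] [Module R M]
    (P₀ P₁ : Submodule R M) (h₀ : P₀.IsStronglyPrime) (h₁ : P₁.IsStronglyPrime)
    (hlt : P₀ < P₁) : P₀.colon ⊤ < P₁.colon ⊤ := by
  have hle : P₀.colon ⊤ ≤ P₁.colon ⊤ := by
    intro r hr
    rw [Submodule.mem_colon] at hr ⊢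
    exact fun m hm => hlt.le (hr m hm)
  refine lt_of_le_of_ne hle fun heq => ?_
  obtain ⟨x, hxP₁, hxP₀⟩ := SetLike.exists_of_lt hlt
  have key : ∀ y : M, x ∈ P₀ ∨ y ∈ P₀ := by
    intro y
    refine h₀.2 x y fun r hr => ?_
    have hrP₁ : r ∈ P₁.colon ⊤ := by
      rw [Submodule.mem_colon]
      intro m _
      have := hr m
      refine (sup_le hlt.le ?_ : P₀ ⊔ Submodule.span R {x} ≤ P₁) this
      rw [Submodule.span_le, Set.singleton_subset_iff]
      exact hxP₁
    rw [← heq, Submodule.mem_colon] at hrP₁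
    exact hrP₁ y trivial
  apply h₀.1
  rw [Submodule.eq_top_iff']
  intro y
  exact (key y).resolve_left hxP₀
end

section
/- Let R be a commutative ring with identity, M an R-module, 𝔮 a prime ideal of R, and Q a submodule of M such that the quotient module M/Q is isomorphic as an R-module to R/𝔮. Then Q is a strongly prime submodule of M. -/
/-! If `x ∉ Q` corresponds to the class of `s` under `M ⧸ Q ≃ R ⧸ 𝔮`, then `s ∉ 𝔮` and
`s • M ⊆ Q + R x`, so `s ∈ I_x^Q`. Hence `I_x^Q • y ⊆ Q` gives `s • y ∈ Q`, and since `R ⧸ 𝔮` is a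
domain, multiplication by `s ∉ 𝔮` is injective on `M ⧸ Q`, so `y ∈ Q`. -/

namespace Submodule

variable {R M : Type*} [CommRing R] [AddCommGroup M] [Module R M] {Q : Submodule R M}

theorem ne_top_of_quotient_equiv {I : Ideal R} (hI : I ≠ ⊤) (e : (M ⧸ Q) ≃ₗ[R] R ⧸ I) :
    Q ≠ ⊤ := by
  rintro rfl
  have : Subsingleton (R ⧸ I) := e.toEquiv.symm.subsingleton
  exact hI (Quotient.subsingleton_iff.mp this)

theorem smul_mem_sup_span_of_quotient_equiv {I : Ideal R} (e : (M ⧸ Q) ≃ₗ[R] R ⧸ I) {x : M}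
    {s : R} (hs : e (Quotient.mk x) = Ideal.Quotient.mk I s) (m : M) :
    s • m ∈ Q ⊔ span R {x} := by
  obtain ⟨u, hu⟩ := Ideal.Quotient.mk_surjective (e (Quotient.mk m))
  -- both `s • m` and `u • x` correspond to the class of `s * u`
  have hQ : s • m - u • x ∈ Q := by
    rw [← Quotient.mk_eq_zero, ← e.map_eq_zero_iff, Quotient.mk_sub, Quotient.mk_smul,
      Quotient.mk_smul, map_sub, map_smul, map_smul, ← hu, hs, Algebra.smul_def,
      Algebra.smul_def, Ideal.Quotient.algebraMap_eq, ← map_mul, ← map_mul, mul_comm, sub_self]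
  simpa using add_mem_sup hQ (smul_mem _ u (mem_span_singleton_self x))

theorem mem_of_smul_mem_of_quotient_equiv {𝔮 : Ideal R} [𝔮.IsPrime] (e : (M ⧸ Q) ≃ₗ[R] R ⧸ 𝔮)
    {s : R} (hs : s ∉ 𝔮) {y : M} (hy : s • y ∈ Q) : y ∈ Q := by
  rw [← Quotient.mk_eq_zero, Quotient.mk_smul, ← e.map_eq_zero_iff, map_smul,
    Algebra.smul_def, Ideal.Quotient.algebraMap_eq] at hy
  rw [← Quotient.mk_eq_zero, ← e.map_eq_zero_iff]
  exact (mul_eq_zero.mp hy).resolve_left (Ideal.Quotient.eq_zero_iff_mem.not.mpr hs)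

end Submodule

/-- If `𝔮` is a prime ideal of `R` and `Q` is a submodule of `M` with `M/Q ≅ R/𝔮` as
`R`-modules, then `Q` is a strongly prime submodule of `M`. -/
theorem isStronglyPrime_of_quotient_equiv
    {R M : Type*} [CommRing R] [AddCommGroup M] [Module R M]
    (𝔮 : Ideal R) (h𝔮 : 𝔮.IsPrime) (Q : Submodule R M)
    (e : (M ⧸ Q) ≃ₗ[R] R ⧸ 𝔮) : Q.IsStronglyPrime := by
  refine ⟨Submodule.ne_top_of_quotient_equiv h𝔮.ne_top e, fun x y hxy => ?_⟩
  by_cases hx : x ∈ Q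
  · exact .inl hx
  obtain ⟨s, hs⟩ := Ideal.Quotient.mk_surjective (e (Submodule.Quotient.mk x))
  have hs𝔮 : s ∉ 𝔮 := by
    rwa [← Ideal.Quotient.eq_zero_iff_mem, hs, e.map_eq_zero_iff, Submodule.Quotient.mk_eq_zero]
  exact .inr <| Submodule.mem_of_smul_mem_of_quotient_equiv e hs𝔮 <|
    hxy s (Submodule.smul_mem_sup_span_of_quotient_equiv e hs.symm)
end

section
/- Let R be a commutative ring with identity, M an R-module, and N ⊆ P submodules of M with P proper. Then P is a strongly prime submodule of M if and only if P/N is a strongly prime submodule of the quotient module M/N. -/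
/-- For submodules `N ⊆ P` of `M` with `P` proper, `P` is strongly prime in `M` if and only if
`P/N` is strongly prime in `M/N`. -/
theorem isStronglyPrime_iff_map_mkQ
    {R M : Type*} [CommRing R] [AddCommGroup M] [Module R M]
    (N P : Submodule R M) (hNP : N ≤ P) (hP : P ≠ ⊤) :
    P.IsStronglyPrime ↔ (P.map N.mkQ).IsStronglyPrime := by
  set q := N.mkQ with hq
  have hc : ∀ S : Submodule R M, N ≤ S → Submodule.comap q (Submodule.map q S) = S := by
    intro S hS
    rw [Submodule.comap_map_eq, Submodule.ker_mkQ, sup_eq_left.mpr hS]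
  have hmemP : ∀ z : M, q z ∈ Submodule.map q P ↔ z ∈ P := by
    intro z
    rw [← Submodule.mem_comap, hc P hNP]
  have hmap_sup : ∀ x : M, Submodule.map q (P ⊔ Submodule.span R {x})
      = Submodule.map q P ⊔ Submodule.span R {q x} := by
    intro x
    rw [Submodule.map_sup, Submodule.map_span, Set.image_singleton]
  have hmem_sup : ∀ x z : M,
      q z ∈ Submodule.map q P ⊔ Submodule.span R {q x} ↔ z ∈ P ⊔ Submodule.span R {x} := by
    intro x z
    rw [← hmap_sup, ← Submodule.mem_comap, hc _ (le_trans hNP le_sup_left)]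
  constructor
  · rintro ⟨-, h⟩
    constructor
    · intro htop
      apply hP
      have := congrArg (Submodule.comap q) htop
      rw [hc P hNP, Submodule.comap_top] at this
      exact this
    · intro x' y' H
      obtain ⟨x, rfl⟩ := N.mkQ_surjective x'
      obtain ⟨y, rfl⟩ := N.mkQ_surjective y'
      rcases h x y (fun r hr => by
        have := H r (fun m' => by
          obtain ⟨m, rfl⟩ := N.mkQ_surjective m'
          rw [← map_smul, hmem_sup]
          exact hr m)
        rwa [← map_smul, hmemP] at this) with hx | hy
      · exact Or.inl ((hmemP x).mpr hx)
      · exact Or.inr ((hmemP y).mpr hy)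
  · rintro ⟨-, h⟩
    refine ⟨hP, fun x y H => ?_⟩
    rcases h (q x) (q y) (fun r hr => by
      rw [← map_smul, hmemP]
      exact H r (fun m => by
        have := hr (q m)
        rwa [← map_smul, hmem_sup] at this)) with hx | hy
    · exact Or.inl ((hmemP x).mp hx)
    · exact Or.inr ((hmemP y).mp hy)
end

section
/- Let F be a field, V an F-vector space, and P a strongly prime subspace of V. Then the quotient space V/P is one-dimensional over F. -/
/-- If `P` is a strongly prime subspace of a vector space `V` over a field `F`, then `V/P` is
one-dimensional over `F`. -/
theorem rank_quotient_eq_one_of_isStronglyPrime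
    {F V : Type*} [Field F] [AddCommGroup V] [Module F V]
    (P : Submodule F V) (hP : P.IsStronglyPrime) :
    Module.rank F (V ⧸ P) = 1 := by
  obtain ⟨hne, hsp⟩ := hP
  obtain ⟨x, hx⟩ : ∃ x, x ∉ P := by
    by_contra h
    push_neg at h
    exact hne (Submodule.eq_top_iff'.mpr h)
  have htop : P ⊔ Submodule.span F {x} = ⊤ := by
    by_contra h
    obtain ⟨y, hy⟩ : ∃ y, y ∉ P ⊔ Submodule.span F {x} := by
      by_contra h'
      push_neg at h'
      exact h (Submodule.eq_top_iff'.mpr h')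
    rcases hsp x y (fun r hr => by
      by_cases hr0 : r = 0
      · simp [hr0]
      · exact absurd (by simpa [smul_smul, hr0] using hr (r⁻¹ • y)) hy) with h1 | h1
    · exact hx h1
    · exact hy (Submodule.mem_sup_left h1)
  refine rank_eq_one (Submodule.Quotient.mk x) (by simpa [Submodule.Quotient.mk_eq_zero]) ?_
  intro w
  obtain ⟨v, rfl⟩ := Submodule.Quotient.mk_surjective P w
  have hv : v ∈ P ⊔ Submodule.span F {x} := htop ▸ Submodule.mem_top
  obtain ⟨p, hp, q, hq, rfl⟩ := Submodule.mem_sup.mp hv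
  obtain ⟨c, rfl⟩ := Submodule.mem_span_singleton.mp hq
  refine ⟨c, ?_⟩
  rw [← Submodule.Quotient.mk_smul]
  rw [Submodule.Quotient.eq]
  simpa using hp
end
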